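/- arXiv:1412.8532 — 4 statements merged into one kernel-verified Lean document; each statement's English description precedes it below -/
import Mathlib

section
/- Let V be a finite vertex type, E : V → V → Prop an edge relation, and f : ℕ. Assume that for every partition of V into three pairwise disjoint sets L, C, R with L and R nonempty, either at least f+1 distinct vertices of L ∪ C have an outgoing edge to some vertex of R, or at least f+1 distinct vertices of C ∪ R have an outgoing edge to some vertex of L. Then for all vertices i, j ∈ V and all sets F_i ⊆ V \ {i} with |F_i| ≤ f and F_j ⊆ V \ {j} with |F_j| ≤ f, the sets reach_i(F_i) and reach_j(F_j) have nonempty intersection. -/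
/-- `u` reaches `v` in the reduced graph `G_F` (the induced subgraph on `V \ F`):
there is a directed path, possibly of length 0, from `u` to `v` all of whose
vertices lie outside `F`. -/
def ReducedReach {V : Type*} (E : V → V → Prop) (F : Finset V) (u v : V) : Prop :=
  Relation.ReflTransGen (fun a b => E a b ∧ a ∉ F ∧ b ∉ F) u v

/-- Lemma 1 for Algorithm WA: If for every partition `L, C, R` of
the vertices with `L` and `R` nonempty, at least `f+1` distinct vertices of
`L ∪ C` have an outgoing edge into `R`, or at least `f+1` distinct vertices of
`C ∪ R` have an outgoing edge into `L`, then for all vertices `i, j` and fault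
sets `F_i ⊆ V \ {i}`, `F_j ⊆ V \ {j}` of size at most `f`, the sets
`reach_i(F_i)` and `reach_j(F_j)` intersect. -/
theorem reach_sets_intersect {V : Type*} [Fintype V] (E : V → V → Prop) (f : ℕ)
    (h : ∀ L C R : Set V, Disjoint L C → Disjoint L R → Disjoint C R →
          L ∪ C ∪ R = Set.univ → L.Nonempty → R.Nonempty →
          f + 1 ≤ {a | a ∈ L ∪ C ∧ ∃ b ∈ R, E a b}.ncard ∨
          f + 1 ≤ {a | a ∈ C ∪ R ∧ ∃ b ∈ L, E a b}.ncard) :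
    ∀ (i j : V) (Fi Fj : Finset V),
      i ∉ Fi → Fi.card ≤ f → j ∉ Fj → Fj.card ≤ f →
      ({x : V | x ∉ Fi ∧ ReducedReach E Fi x i} ∩
       {x : V | x ∉ Fj ∧ ReducedReach E Fj x j}).Nonempty := by
  intro i j Fi Fj hi hFi hj hFj
  by_contra hcon
  rw [Set.not_nonempty_iff_eq_empty] at hcon
  set A := {x : V | x ∉ Fi ∧ ReducedReach E Fi x i} with hA
  set B := {x : V | x ∉ Fj ∧ ReducedReach E Fj x j} with hB
  have hAB : Disjoint A B := Set.disjoint_iff_inter_eq_empty.mpr hcon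
  have hiA : i ∈ A := ⟨hi, Relation.ReflTransGen.refl⟩
  have hjB : j ∈ B := ⟨hj, Relation.ReflTransGen.refl⟩
  have closA : ∀ a b, E a b → b ∈ A → a ∉ Fi → a ∈ A := by
    rintro a b hE ⟨hbF, hbr⟩ haF
    exact ⟨haF, Relation.ReflTransGen.head ⟨hE, haF, hbF⟩ hbr⟩
  have closB : ∀ a b, E a b → b ∈ B → a ∉ Fj → a ∈ B := by
    rintro a b hE ⟨hbF, hbr⟩ haF
    exact ⟨haF, Relation.ReflTransGen.head ⟨hE, haF, hbF⟩ hbr⟩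
  set C := Set.univ \ (A ∪ B) with hC
  have h1 : Disjoint A C := Set.disjoint_left.mpr fun x hx hx2 => hx2.2 (Or.inl hx)
  have h2 : Disjoint C B := Set.disjoint_left.mpr fun x hx hx2 => hx.2 (Or.inr hx2)
  have h3 : A ∪ C ∪ B = Set.univ := by
    ext x; simp only [Set.mem_union, Set.mem_diff, Set.mem_univ, hC]; tauto
  have key : ∀ (F : Finset V) (S : Set V), F.card ≤ f → f + 1 ≤ S.ncard →
      ∃ a ∈ S, a ∉ F := by
    intro F S hle hcard
    by_contra hc
    push_neg at hc
    have : S.ncard ≤ F.card := by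
      calc S.ncard ≤ (↑F : Set V).ncard :=
             Set.ncard_le_ncard (fun x hx => hc x hx) F.finite_toSet
        _ = F.card := Set.ncard_coe_finset F
    omega
  rcases h A C B h1 hAB h2 h3 ⟨i, hiA⟩ ⟨j, hjB⟩ with hL | hR
  · obtain ⟨a, ⟨haAC, b, hbB, hE⟩, haF⟩ := key Fj _ hFj hL
    have haB := closB a b hE hbB haF
    rcases haAC with hcase | hcase
    · exact Set.disjoint_left.mp hAB hcase haB
    · exact hcase.2 (Or.inr haB)
  · obtain ⟨a, ⟨haCB, b, hbA, hE⟩, haF⟩ := key Fi _ hFi hR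
    have haA := closA a b hE hbA haF
    rcases haCB with hcase | hcase
    · exact hcase.2 (Or.inl haA)
    · exact Set.disjoint_left.mp hAB haA hcase
end

section
/- Let V be a finite vertex type and E : V → V → Prop a reflexive edge relation. Let v : ℕ → V → Bool satisfy min-flooding dynamics: v_{t+1}(j) = true if and only if v_t(i) = true for every i with E i j. Then for every t and every vertex j: v_t(j) = false if and only if there exists a vertex i with v_0(i) = false and a directed path from i to j of length at most t. -/
/-- A directed path of length `k` from `u` to `v`: a sequence
`u = x 0, x 1, …, x k = v` with an edge from each vertex to the next. -/
def PathLen {V : Type*} (E : V → V → Prop) (k : ℕ) (u v : V) : Prop :=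
  ∃ x : ℕ → V, x 0 = u ∧ x k = v ∧ ∀ m < k, E (x m) (x (m + 1))

/-- Under min-flooding dynamics on a reflexive edge relation
(`v_{t+1}(j) = true` iff `v_t(i) = true` for every in-neighbor `i` of `j`),
a vertex `j` holds `false` at time `t` iff some vertex `i` holding `false`
initially has a directed path to `j` of length at most `t`. -/
theorem min_flooding_false_iff {V : Type*} [Fintype V] (E : V → V → Prop)
    (hrefl : ∀ i : V, E i i) (v : ℕ → V → Bool)
    (hdyn : ∀ t (j : V), v (t + 1) j = true ↔ ∀ i : V, E i j → v t i = true) :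
    ∀ t (j : V), v t j = false ↔
      ∃ i : V, v 0 i = false ∧ ∃ k ≤ t, PathLen E k i j := by
  have hdyn' : ∀ t (j : V), v (t + 1) j = false ↔ ∃ i : V, E i j ∧ v t i = false := by
    intro t j
    constructor
    · intro h
      by_contra hc
      push_neg at hc
      have := (hdyn t j).2 (fun i hij => by
        rcases Bool.eq_false_or_eq_true (v t i) with h' | h'
        · exact h'
        · exact absurd h' (hc i hij))
      simp [this] at h
    · rintro ⟨i, hij, hi⟩
      rcases Bool.eq_false_or_eq_true (v (t+1) j) with h' | h'
      · have := (hdyn t j).1 h' i hij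
        simp [this] at hi
      · exact h'
  intro t
  induction t with
  | zero =>
    intro j
    constructor
    · intro h
      exact ⟨j, h, 0, le_refl 0, fun _ => j, rfl, rfl, by omega⟩
    · rintro ⟨i, hi, k, hk, x, hx0, hxk, _⟩
      have : k = 0 := Nat.le_zero.mp hk
      subst this
      rw [← hxk, hx0]; exact hi
  | succ t ih =>
    intro j
    rw [hdyn']
    constructor
    · rintro ⟨i, hij, hi⟩
      rcases (ih i).1 hi with ⟨w, hw, k, hk, x, hx0, hxk, hxe⟩
      refine ⟨w, hw, k + 1, by omega, fun m => if m ≤ k then x m else j, ?_, ?_, ?_⟩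
      · simp [hx0]
      · simp
      · intro m hm
        rcases Nat.lt_succ_iff_lt_or_eq.mp hm with h | h
        · simp only [Nat.le_of_lt h, Nat.succ_le_of_lt h, if_true]
          exact hxe m h
        · subst h
          simp [hxk, hij]
    · rintro ⟨w, hw, k, hk, x, hx0, hxk, hxe⟩
      rcases Nat.eq_zero_or_eq_succ_pred k with h | h
      · -- k = 0, so w = j
        subst h
        refine ⟨j, hrefl j, (ih j).2 ⟨w, hw, 0, Nat.zero_le t, x, hx0, hxk, by omega⟩⟩
      · refine ⟨x (k - 1), ?_, (ih (x (k-1))).2 ⟨w, hw, k - 1, by omega, x, hx0, rfl, fun m hm => hxe m (by omega)⟩⟩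
        have : k - 1 + 1 = k := by omega
        have he := hxe (k - 1) (by omega)
        rw [this, hxk] at he
        exact he
end

section
/- Let V be a finite vertex type and E : V → V → Prop a reflexive edge relation. Let v : ℕ → V → Bool satisfy min-flooding dynamics: v_{t+1}(j) = true if and only if v_t(i) = true for every i with E i j. Suppose s ∈ V is such that v_0(s) = false and every vertex j ∈ V is reachable from s by a directed path of length at most d. Then v_d(j) = false for every vertex j ∈ V. -/
/-- Case I of Algorithm Min-Max: Under min-flooding dynamics on a
reflexive edge relation, if `s` initially holds `false` and every vertex is
reachable from `s` by a directed path of length at most `d`, then after `d`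
rounds every vertex holds `false`. -/
theorem min_flooding_source_false {V : Type*} [Fintype V] (E : V → V → Prop)
    (hrefl : ∀ i : V, E i i) (v : ℕ → V → Bool)
    (hdyn : ∀ t (j : V), v (t + 1) j = true ↔ ∀ i : V, E i j → v t i = true)
    (s : V) (d : ℕ) (hs : v 0 s = false)
    (hreach : ∀ j : V, ∃ k ≤ d, PathLen E k s j) :
    ∀ j : V, v d j = false := by
  have step : ∀ t (u w : V), E u w → v t u = false → v (t + 1) w = false := by
    intro t u w he hu
    by_contra h
    have : v (t + 1) w = true := by
      cases hvw : v (t + 1) w with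
      | false => exact absurd hvw h
      | true => rfl
    have := (hdyn t w).mp this u he
    rw [hu] at this; exact Bool.false_ne_true this
  intro j
  obtain ⟨k, hk, x, hx0, hxk, hedge⟩ := hreach j
  have hpath : ∀ m ≤ k, v m (x m) = false := by
    intro m hm
    induction m with
    | zero => rwa [hx0]
    | succ n ih =>
      exact step n (x n) (x (n + 1)) (hedge n (Nat.lt_of_succ_le hm))
        (ih (Nat.le_of_succ_le hm))
  have hj : v k j = false := by rw [← hxk]; exact hpath k le_rfl
  have pad : ∀ m, v (k + m) j = false := by
    intro m
    induction m with
    | zero => exact hj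
    | succ n ih => exact step (k + n) j j (hrefl j) ih
  have := pad (d - k)
  rwa [Nat.add_sub_cancel' hk] at this
end

section
/- Fix f : ℕ with f ≥ 1 and define the directed graph G on the vertex type V = Fin (f+1) ⊕ Unit ⊕ Unit, where the Fin (f+1) vertices are the 'clique' nodes, the first Unit vertex is the source s, and the second Unit vertex is the leaf l; the edges are: E c c' for every pair of distinct clique nodes c, c' (a bidirectional clique), E s c for every clique node c, and E c l for every clique node c (and no other edges; in particular no edge into s, no edge out of l, and no edge from s to l). Then G satisfies f CT node connectivity: for every F ⊆ V with |F| ≤ f, there exists a vertex r ∈ V \ F that reaches every vertex of V \ F by a directed path all of whose vertices lie outside F. -/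
/-- The counterexample graph of Theorem 5: vertices are the `f+1` clique nodes
(`Sum.inl c`), the source `s = Sum.inr (Sum.inl ())` and the leaf
`l = Sum.inr (Sum.inr ())`. Edges: between every pair of distinct clique nodes,
from `s` to every clique node, and from every clique node to `l`; no other
edges (no edge into `s`, none out of `l`, and no edge `s → l`). -/
def CounterE (f : ℕ) : (Fin (f + 1) ⊕ Unit ⊕ Unit) → (Fin (f + 1) ⊕ Unit ⊕ Unit) → Prop
  | Sum.inl c, Sum.inl c' => c ≠ c'
  | Sum.inr (Sum.inl _), Sum.inl _ => True
  | Sum.inl _, Sum.inr (Sum.inr _) => True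
  | _, _ => False

/-- for `f ≥ 1`, the counterexample graph satisfies `f` CT node
connectivity: for every fault set `F` with `|F| ≤ f` there is a vertex
`r ∉ F` that reaches every vertex outside `F` by a directed path all of whose
vertices lie outside `F`. -/
theorem counterexample_CT_connectivity (f : ℕ) (hf : 1 ≤ f) :
    ∀ F : Finset (Fin (f + 1) ⊕ Unit ⊕ Unit), F.card ≤ f →
      ∃ r, r ∉ F ∧ ∀ v, v ∉ F → ReducedReach (CounterE f) F r v := by
  intro F hF
  obtain ⟨c₀, hc₀⟩ : ∃ c : Fin (f + 1), Sum.inl c ∉ F := by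
    by_contra h
    push_neg at h
    have hsub : (Finset.univ.image (Sum.inl : Fin (f + 1) → Fin (f + 1) ⊕ Unit ⊕ Unit)) ⊆ F := by
      intro x hx
      simp only [Finset.mem_image, Finset.mem_univ, true_and] at hx
      obtain ⟨c, rfl⟩ := hx
      exact h c
    have := Finset.card_le_card hsub
    rw [Finset.card_image_of_injective _ Sum.inl_injective, Finset.card_univ,
      Fintype.card_fin] at this
    omega
  by_cases hs : (Sum.inr (Sum.inl ()) : Fin (f + 1) ⊕ Unit ⊕ Unit) ∈ F
  · refine ⟨Sum.inl c₀, hc₀, ?_⟩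
    intro v hv
    match v with
    | Sum.inl c =>
      by_cases hcc : c₀ = c
      · subst hcc; exact .refl
      · exact .single ⟨hcc, hc₀, hv⟩
    | Sum.inr (Sum.inl u) => cases u; exact (hv hs).elim
    | Sum.inr (Sum.inr u) => refine .single ?_; exact ⟨trivial, hc₀, hv⟩
  · refine ⟨Sum.inr (Sum.inl ()), hs, ?_⟩
    intro v hv
    match v with
    | Sum.inl c => refine .single ?_; exact ⟨trivial, hs, hv⟩
    | Sum.inr (Sum.inl u) => cases u; exact .refl
    | Sum.inr (Sum.inr u) =>
      refine .head (b := Sum.inl c₀) ⟨trivial, hs, hc₀⟩ (.single ?_); exact ⟨trivial, hc₀, hv⟩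
end
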